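/- arXiv:1108.2780 — 4 statements merged into one kernel-verified Lean document; each statement's English description precedes it below -/
import Mathlib

section
/- For the loop potential W = x₁^{a₁}x₂ + x₂^{a₂}x₃ + ⋯ + x_{n-1}^{a_{n-1}}xₙ + xₙ^{aₙ}x₁, the group Aut(W) = A⁻¹ℤ^n/ℤ^n is cyclic of order a₁⋯aₙ + (−1)^{n+1}. -/
open Matrix QuotientAddGroup

noncomputable section

def IntLat (n : ℕ) : AddSubgroup (Fin n → ℚ) where
  carrier := {v | ∀ i, ∃ m : ℤ, v i = (m : ℚ)}
  add_mem' := by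
    intro a b ha hb i
    obtain ⟨p, hp⟩ := ha i
    obtain ⟨q, hq⟩ := hb i
    exact ⟨p + q, by simp [hp, hq]⟩
  zero_mem' := fun i => ⟨0, by simp⟩
  neg_mem' := by
    intro a ha i
    obtain ⟨p, hp⟩ := ha i
    exact ⟨-p, by simp [hp]⟩

abbrev QuotLat (n : ℕ) := (Fin n → ℚ) ⧸ IntLat n

def ratMat {n : ℕ} (A : Matrix (Fin n) (Fin n) ℤ) : Matrix (Fin n) (Fin n) ℚ :=
  A.map ((↑) : ℤ → ℚ)

def AutW {n : ℕ} (A : Matrix (Fin n) (Fin n) ℤ) : AddSubgroup (QuotLat n) :=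
  (AddSubgroup.comap (ratMat A).mulVecLin.toAddMonoidHom (IntLat n)).map
    (QuotientAddGroup.mk' (IntLat n))

def ZinQ : AddSubgroup ℚ := (Int.castAddHom ℚ).range

def sumHom (n : ℕ) : (Fin n → ℚ) →+ ℚ :=
  AddMonoidHom.mk' (fun v => ∑ i, v i) (by
    intro a b
    simpa using Finset.sum_add_distrib)

def qsum (n : ℕ) : QuotLat n →+ ℚ ⧸ ZinQ :=
  QuotientAddGroup.lift (IntLat n) ((QuotientAddGroup.mk' ZinQ).comp (sumHom n)) (by
    intro v hv
    have hv' : ∀ i, ∃ m : ℤ, v i = (m : ℚ) := hv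
    choose m hm using hv'
    have hmem : (∑ i, v i) ∈ ZinQ := ⟨∑ i, m i, by push_cast [hm]; simp⟩
    simpa [sumHom] using (QuotientAddGroup.eq_zero_iff _).mpr hmem)

def SLW {n : ℕ} (A : Matrix (Fin n) (Fin n) ℤ) : AddSubgroup (QuotLat n) :=
  AutW A ⊓ (qsum n).ker

def WellFormedWeights {n : ℕ} (w : Fin n → ℤ) (d : ℤ) : Prop :=
  (∀ i, Finset.gcd (Finset.univ.erase i) w = 1) ∧
  ∀ i j, i ≠ j → ((Finset.gcd ((Finset.univ.erase i).erase j) w) ∣ d)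

/-!
Index from `0` and write `ū ∈ (ℚ/ℤ)ⁿ` for the reduction of `u ∈ ℚⁿ`. The class of `u` lies in
`Aut(W)` iff `aᵢ ūᵢ + ūᵢ₊₁ = 0` for all `i` (indices mod `n`). The first `n - 1` equations force
`ūᵢ = qᵢ ū₀` with `qᵢ = ∏_{j<i} (-aⱼ)` (`loopSolution`), and the last one then reads `±D ū₀ = 0`,
where `D = a₀⋯aₙ₋₁ + (-1)^(n+1)` (`loopDet`). Hence `u ↦ ū₀` embeds `Aut(W)` into the
`D`-torsion of `ℚ/ℤ`, which is cyclic of order `D`, and the embedding hits the generator `1/D`,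
the image of `q/D`. When `D = 0` the same vector `q` lies in the kernel of `A`, so `det A ≠ 0`
forces `D ≠ 0`.
-/

theorem eq_partialProd_smul_zero {R M : Type*} [CommMonoid R] [MulAction R M] {m : ℕ}
    (c : Fin m → R) (x : Fin (m + 1) → M) (h : ∀ i : Fin m, x i.succ = c i • x i.castSucc)
    (i : Fin (m + 1)) : x i = Fin.partialProd c i • x 0 := by
  induction i using Fin.induction with
  | zero => rw [Fin.partialProd_zero, one_smul]
  | succ i ih => rw [h, ih, smul_smul, Fin.partialProd_succ, mul_comm]

theorem Fin.partialProd_last {M : Type*} [CommMonoid M] {n : ℕ} (f : Fin n → M) :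
    Fin.partialProd f (Fin.last n) = ∏ i, f i := by
  rw [Fin.partialProd, Fin.val_last, List.take_of_length_le (by simp), List.prod_ofFn]

theorem mem_ZinQ {q : ℚ} : q ∈ ZinQ ↔ ∃ m : ℤ, (m : ℚ) = q := Iff.rfl

theorem zsmul_mk_inv_eq_zero_iff {d : ℤ} (hd : d ≠ 0) (k : ℤ) :
    k • (((d : ℚ)⁻¹ : ℚ) : ℚ ⧸ ZinQ) = 0 ↔ d ∣ k := by
  rw [← QuotientAddGroup.mk_zsmul, QuotientAddGroup.eq_zero_iff, mem_ZinQ, zsmul_eq_mul]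
  constructor
  · rintro ⟨z, hz⟩
    have hk : (k : ℚ) = d * z := by
      field_simp at hz
      linarith
    exact ⟨z, by exact_mod_cast hk⟩
  · rintro ⟨z, rfl⟩
    exact ⟨z, by push_cast; field_simp⟩

theorem addOrderOf_mk_inv {d : ℤ} (hd : 0 < d) :
    (addOrderOf (((d : ℚ)⁻¹ : ℚ) : ℚ ⧸ ZinQ) : ℤ) = d := by
  refine Int.dvd_antisymm (Nat.cast_nonneg _) hd.le ?_ ?_
  · rw [addOrderOf_dvd_iff_zsmul_eq_zero, zsmul_mk_inv_eq_zero_iff hd.ne']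
  · rw [← zsmul_mk_inv_eq_zero_iff hd.ne', ← addOrderOf_dvd_iff_zsmul_eq_zero]

theorem mem_zmultiples_mk_inv {d : ℤ} (hd : d ≠ 0) {t : ℚ ⧸ ZinQ} (ht : d • t = 0) :
    t ∈ AddSubgroup.zmultiples (((d : ℚ)⁻¹ : ℚ) : ℚ ⧸ ZinQ) := by
  obtain ⟨r, rfl⟩ := QuotientAddGroup.mk_surjective t
  rw [← QuotientAddGroup.mk_zsmul, QuotientAddGroup.eq_zero_iff, mem_ZinQ, zsmul_eq_mul] at ht
  obtain ⟨k, hk⟩ := ht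
  refine ⟨k, ?_⟩
  change k • _ = _
  rw [← QuotientAddGroup.mk_zsmul, zsmul_eq_mul]
  congr 1
  field_simp
  linarith

theorem mem_IntLat_iff {n : ℕ} {v : Fin n → ℚ} :
    v ∈ IntLat n ↔ ∀ i, ((v i : ℚ) : ℚ ⧸ ZinQ) = 0 := by
  refine forall_congr' fun i => ?_
  rw [QuotientAddGroup.eq_zero_iff, mem_ZinQ]
  exact exists_congr fun _ => eq_comm

def coordHom {n : ℕ} (i : Fin n) : QuotLat n →+ ℚ ⧸ ZinQ :=
  QuotientAddGroup.map _ _ (Pi.evalAddMonoidHom _ i) fun v hv =>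
    (QuotientAddGroup.eq_zero_iff (v i)).1 (mem_IntLat_iff.1 hv i)

theorem coordHom_mk {n : ℕ} (i : Fin n) (u : Fin n → ℚ) :
    coordHom i (u : QuotLat n) = ((u i : ℚ) : ℚ ⧸ ZinQ) := rfl

theorem mem_AutW_iff {n : ℕ} {A : Matrix (Fin n) (Fin n) ℤ} {x : QuotLat n} :
    x ∈ AutW A ↔ ∃ u, ratMat A *ᵥ u ∈ IntLat n ∧ (u : QuotLat n) = x := Iff.rfl

theorem single_intCast_mem_IntLat {n : ℕ} (i : Fin n) (k : ℤ) :
    Pi.single i (k : ℚ) ∈ IntLat n := fun j => by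
  by_cases h : j = i
  · exact ⟨k, by simp [h]⟩
  · exact ⟨0, by simp [h]⟩

def loopMatrix {n : ℕ} (a : Fin n → ℕ) : Matrix (Fin n) (Fin n) ℤ :=
  Matrix.of fun i j => if j = i then (a i : ℤ) else if (j : ℕ) = ((i : ℕ) + 1) % n then 1 else 0

section Loop

variable {m : ℕ} (a : Fin (m + 2) → ℕ)

theorem ratMat_loopMatrix_mulVec_apply (u : Fin (m + 2) → ℚ) (i : Fin (m + 2)) :
    (ratMat (loopMatrix a) *ᵥ u) i = a i * u i + u (i + 1) := by
  have hne : i + 1 ≠ i := by simp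
  have hrow : ratMat (loopMatrix a) i = Pi.single i (a i : ℚ) + Pi.single (i + 1) 1 := by
    ext j
    have hsucc : (j : ℕ) = ((i : ℕ) + 1) % (m + 2) ↔ j = i + 1 := by
      simp [Fin.ext_iff, Fin.val_add]
    by_cases hji : j = i
    · simp [ratMat, loopMatrix, hji, hne.symm]
    · simp [ratMat, loopMatrix, hji, hsucc, Pi.single_apply]
  rw [mulVec, hrow, add_dotProduct, single_dotProduct, single_dotProduct, one_mul]

theorem ratMat_loopMatrix_mulVec_mem_IntLat_iff (u : Fin (m + 2) → ℚ) :
    ratMat (loopMatrix a) *ᵥ u ∈ IntLat (m + 2) ↔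
      ∀ i, a i • ((u i : ℚ) : ℚ ⧸ ZinQ) + ((u (i + 1) : ℚ) : ℚ ⧸ ZinQ) = 0 := by
  simp only [mem_IntLat_iff, ratMat_loopMatrix_mulVec_apply, QuotientAddGroup.mk_add,
    ← nsmul_eq_mul, QuotientAddGroup.mk_nsmul]

def loopSolution : Fin (m + 2) → ℤ :=
  Fin.partialProd fun i : Fin (m + 1) => -(a i.castSucc : ℤ)

def loopDet : ℤ :=
  ∏ i, (a i : ℤ) + (-1) ^ (m + 2 + 1)

theorem loopSolution_last_mul_add_one :
    (a (Fin.last _) : ℤ) * loopSolution a (Fin.last _) + 1 = loopDet a * (-1) ^ (m + 1) := by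
  have hsign : ((-1 : ℤ) ^ (m + 1)) ^ 2 = 1 := by rw [← pow_mul, pow_mul']; simp
  rw [loopSolution, Fin.partialProd_last, loopDet, Fin.prod_univ_castSucc (fun i => (a i : ℤ)),
    Finset.prod_neg, Finset.card_univ, Fintype.card_fin]
  linear_combination -hsign

theorem ratMat_loopMatrix_mulVec_loopSolution :
    ratMat (loopMatrix a) *ᵥ (fun i => (loopSolution a i : ℚ)) =
      Pi.single (Fin.last _) ((loopDet a * (-1) ^ (m + 1) : ℤ) : ℚ) := by
  ext i
  rw [ratMat_loopMatrix_mulVec_apply]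
  induction i using Fin.lastCases with
  | last =>
    rw [Pi.single_eq_same, Fin.last_add_one, loopSolution, Fin.partialProd_zero,
      ← loopSolution_last_mul_add_one, loopSolution]
    push_cast
    ring
  | cast i =>
    rw [Pi.single_eq_of_ne (Fin.castSucc_lt_last i).ne, Fin.coeSucc_eq_succ, loopSolution,
      Fin.partialProd_succ]
    push_cast
    ring

theorem loopDet_ne_zero (h : (loopMatrix a).det ≠ 0) : loopDet a ≠ 0 := by
  intro hD
  have hdet : (ratMat (loopMatrix a)).det = 0 := by
    refine Matrix.exists_mulVec_eq_zero_iff.1 ⟨fun i => (loopSolution a i : ℚ), ?_, ?_⟩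
    · exact fun h0 => by simpa [loopSolution] using congrFun h0 0
    · simp [ratMat_loopMatrix_mulVec_loopSolution, hD]
  rw [ratMat, ← Int.cast_det, Int.cast_eq_zero] at hdet
  exact h hdet

theorem loopDet_nonneg (ha : ∀ i, 1 ≤ a i) : 0 ≤ loopDet a := by
  have hprod : 1 ≤ ∏ i, (a i : ℤ) := Finset.one_le_prod fun i _ => by exact_mod_cast ha i
  rcases neg_one_pow_eq_or ℤ (m + 2 + 1) with h | h <;> rw [loopDet, h] <;> omega

variable {a}

theorem coord_eq_loopSolution_smul {u : Fin (m + 2) → ℚ}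
    (hu : ratMat (loopMatrix a) *ᵥ u ∈ IntLat (m + 2)) (i : Fin (m + 2)) :
    ((u i : ℚ) : ℚ ⧸ ZinQ) = loopSolution a i • ((u 0 : ℚ) : ℚ ⧸ ZinQ) := by
  rw [ratMat_loopMatrix_mulVec_mem_IntLat_iff] at hu
  refine eq_partialProd_smul_zero _ (fun i => ((u i : ℚ) : ℚ ⧸ ZinQ)) (fun j => ?_) i
  rw [← Fin.coeSucc_eq_succ, neg_smul, natCast_zsmul, eq_neg_iff_add_eq_zero, add_comm]
  exact hu j.castSucc

theorem loopDet_smul_coord_zero {u : Fin (m + 2) → ℚ}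
    (hu : ratMat (loopMatrix a) *ᵥ u ∈ IntLat (m + 2)) :
    loopDet a • ((u 0 : ℚ) : ℚ ⧸ ZinQ) = 0 := by
  have hclose := (ratMat_loopMatrix_mulVec_mem_IntLat_iff a u).1 hu (Fin.last _)
  rw [Fin.last_add_one, coord_eq_loopSolution_smul hu, ← natCast_zsmul, smul_smul,
    ← add_one_zsmul, loopSolution_last_mul_add_one, mul_smul] at hclose
  rcases neg_one_pow_eq_or ℤ (m + 1) with h | h <;> simpa [h] using hclose

theorem injective_coordHom_comp_subtype :
    Function.Injective ((coordHom 0).comp (AutW (loopMatrix a)).subtype) := by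
  refine (injective_iff_map_eq_zero _).2 fun ⟨x, hx⟩ h0 => ?_
  obtain ⟨u, hu, rfl⟩ := mem_AutW_iff.1 hx
  change ((u 0 : ℚ) : ℚ ⧸ ZinQ) = 0 at h0
  refine Subtype.ext ((QuotientAddGroup.eq_zero_iff u).2 (mem_IntLat_iff.2 fun i => ?_))
  rw [coord_eq_loopSolution_smul hu, h0, smul_zero]

theorem range_coordHom_comp_subtype (hD : loopDet a ≠ 0) :
    ((coordHom 0).comp (AutW (loopMatrix a)).subtype).range =
      AddSubgroup.zmultiples (((loopDet a : ℚ)⁻¹ : ℚ) : ℚ ⧸ ZinQ) := by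
  apply le_antisymm
  · rintro _ ⟨⟨x, hx⟩, rfl⟩
    obtain ⟨u, hu, rfl⟩ := mem_AutW_iff.1 hx
    exact mem_zmultiples_mk_inv hD (loopDet_smul_coord_zero hu)
  · set v : Fin (m + 2) → ℚ := (loopDet a : ℚ)⁻¹ • fun i => (loopSolution a i : ℚ)
    have hv : ratMat (loopMatrix a) *ᵥ v ∈ IntLat (m + 2) := by
      rw [mulVec_smul, ratMat_loopMatrix_mulVec_loopSolution, ← Pi.single_smul, smul_eq_mul,
        Int.cast_mul, inv_mul_cancel_left₀ (Int.cast_ne_zero.2 hD)]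
      exact single_intCast_mem_IntLat _ _
    refine AddSubgroup.zmultiples_le.2 ⟨⟨v, mem_AutW_iff.2 ⟨v, hv, rfl⟩⟩, ?_⟩
    simp [coordHom_mk, v, loopSolution]

end Loop

/-- For the loop potential, Aut(W) = A⁻¹ℤ^n/ℤ^n is cyclic of
order a₁⋯aₙ + (−1)^{n+1}. -/
theorem stmt_5 (n : ℕ) (hn : 2 ≤ n) (a : Fin n → ℕ) (ha : ∀ i, 1 ≤ a i)
    (A : Matrix (Fin n) (Fin n) ℤ)
    (hAdef : A = Matrix.of fun i j => if j = i then (a i : ℤ) else if (j : ℕ) = ((i : ℕ) + 1) % n then 1 else 0)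
    (hA : A.det ≠ 0) :
    IsAddCyclic (AutW A) ∧
      ((Nat.card (AutW A) : ℤ) = (∏ i, (a i : ℤ)) + (-1) ^ (n + 1)) := by
  obtain ⟨m, rfl⟩ : ∃ m, n = m + 2 := ⟨n - 2, by omega⟩
  obtain rfl : A = loopMatrix a := hAdef
  have hD : 0 < loopDet a := (loopDet_nonneg a ha).lt_of_ne' (loopDet_ne_zero a hA)
  let e := (AddMonoidHom.ofInjective injective_coordHom_comp_subtype).trans
    (AddEquiv.addSubgroupCongr (range_coordHom_comp_subtype hD.ne'))
  constructor
  · exact isAddCyclic_of_surjective e.symm e.symm.surjective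
  · rw [Nat.card_congr e.toEquiv, Nat.card_zmultiples, addOrderOf_mk_inv hD, loopDet]
end
end

section
/- For the chain potential W = x₁^{a₁}x₂ + x₂^{a₂}x₃ + ⋯ + x_{n-1}^{a_{n-1}}xₙ + xₙ^{aₙ}, the group Aut(W) = A⁻¹ℤ^n/ℤ^n is cyclic of order a₁⋯aₙ, generated by the vector (φ₁,…,φₙ) with φᵢ = (−1)^{n+i}/(aᵢ⋯aₙ). -/
open Matrix QuotientAddGroup

noncomputable section

/-!
Row `i` of `A x ∈ ℤⁿ` says `aᵢ xᵢ + xᵢ₊₁ ∈ ℤ`, and the last row says `aₙ xₙ ∈ ℤ`. Read forwards,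
these congruences determine `x` modulo `ℤⁿ` from `x₁ mod ℤ`; read backwards, they give
`(aᵢ ⋯ aₙ) xᵢ ∈ ℤ`, in particular `x₁ ∈ (a₁ ⋯ aₙ)⁻¹ ℤ`. Since `φ` is a solution with
`φ₁ = ±1 / (a₁ ⋯ aₙ)`, every solution is `k φ` modulo `ℤⁿ`, and `k φ ∈ ℤⁿ` exactly when
`a₁ ⋯ aₙ ∣ k`.
-/

def chainMatrix {n : ℕ} (a : Fin n → ℕ) : Matrix (Fin n) (Fin n) ℤ :=
  Matrix.of fun i j => if j = i then (a i : ℤ) else if (i : ℕ) + 1 = (j : ℕ) then 1 else 0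

def chainGenerator {n : ℕ} (a : Fin n → ℕ) : Fin n → ℚ :=
  fun i => (-1 : ℚ) ^ (n + (i : ℕ)) / ∏ j ∈ Finset.Ici i, (a j : ℚ)

lemma mem_intLat_iff {n : ℕ} {v : Fin n → ℚ} : v ∈ IntLat n ↔ ∀ i, v i ∈ ZinQ :=
  forall_congr' fun _ => exists_congr fun _ => eq_comm

lemma natCast_mul_mem_zinQ (k : ℕ) {q : ℚ} (hq : q ∈ ZinQ) : (k : ℚ) * q ∈ ZinQ := by
  simpa only [nsmul_eq_mul] using ZinQ.nsmul_mem hq k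

lemma intCast_div_mem_zinQ_iff {k : ℤ} {N : ℕ} (hN : N ≠ 0) :
    (k : ℚ) / N ∈ ZinQ ↔ (N : ℤ) ∣ k := by
  constructor
  · rintro ⟨t, ht⟩
    simp only [Int.coe_castAddHom] at ht
    rw [eq_div_iff (Nat.cast_ne_zero.mpr hN)] at ht
    exact ⟨t, by rw [mul_comm]; exact_mod_cast ht.symm⟩
  · rintro ⟨t, rfl⟩
    exact ⟨t, by simp [hN]⟩

lemma Fin.prod_Ici_castSucc {M : Type*} [CommMonoid M] {m : ℕ} (f : Fin (m + 1) → M)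
    (i : Fin m) :
    ∏ j ∈ Finset.Ici i.castSucc, f j = f i.castSucc * ∏ j ∈ Finset.Ici i.succ, f j := by
  have : Finset.Ioi i.castSucc = Finset.Ici i.succ := by
    ext j; simp [Fin.castSucc_lt_iff_succ_le]
  rw [← Finset.Ioi_insert, Finset.prod_insert Finset.notMem_Ioi_self, this]

lemma Fin.prod_Ici_last {M : Type*} [CommMonoid M] {m : ℕ} (f : Fin (m + 1) → M) :
    ∏ j ∈ Finset.Ici (Fin.last m), f j = f (Fin.last m) := by
  rw [← Fin.top_eq_last, Finset.Ici_top, Finset.prod_singleton]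

section Chain

variable {m : ℕ} (a : Fin (m + 1) → ℕ)

lemma ratMat_chainMatrix_mulVec_castSucc (v : Fin (m + 1) → ℚ) (i : Fin m) :
    (ratMat (chainMatrix a) *ᵥ v) i.castSucc = a i.castSucc * v i.castSucc + v i.succ := by
  rw [mulVec, dotProduct, Fintype.sum_eq_add i.castSucc i.succ Fin.castSucc_lt_succ.ne]
  · simp [ratMat, chainMatrix, Fin.ext_iff]
  · rintro j ⟨h1, h2⟩
    simp only [ratMat, chainMatrix, map_apply, of_apply, if_neg h1]
    simp [Fin.ext_iff] at h2 ⊢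
    omega

lemma ratMat_chainMatrix_mulVec_last (v : Fin (m + 1) → ℚ) :
    (ratMat (chainMatrix a) *ᵥ v) (Fin.last m) = a (Fin.last m) * v (Fin.last m) := by
  rw [mulVec, dotProduct, Fintype.sum_eq_single (Fin.last m)]
  · simp [ratMat, chainMatrix]
  · intro j hj
    have := j.isLt
    simp only [ratMat, chainMatrix, map_apply, of_apply, if_neg hj]
    simp
    omega

variable {a}

lemma mem_intLat_of_chainMatrix_mulVec_mem {v : Fin (m + 1) → ℚ}
    (hv : ratMat (chainMatrix a) *ᵥ v ∈ IntLat (m + 1)) (h0 : v 0 ∈ ZinQ) :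
    v ∈ IntLat (m + 1) := by
  rw [mem_intLat_iff] at hv ⊢
  intro i
  induction i using Fin.induction with
  | zero => exact h0
  | succ i ih =>
    have hrow := hv i.castSucc
    rw [ratMat_chainMatrix_mulVec_castSucc] at hrow
    simpa using ZinQ.sub_mem hrow (natCast_mul_mem_zinQ (a i.castSucc) ih)

lemma prod_Ici_mul_mem_zinQ_of_chainMatrix_mulVec_mem {v : Fin (m + 1) → ℚ}
    (hv : ratMat (chainMatrix a) *ᵥ v ∈ IntLat (m + 1)) (i : Fin (m + 1)) :
    (∏ j ∈ Finset.Ici i, (a j : ℚ)) * v i ∈ ZinQ := by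
  rw [mem_intLat_iff] at hv
  induction i using Fin.reverseInduction with
  | last => simpa [Fin.prod_Ici_last, ratMat_chainMatrix_mulVec_last] using hv (Fin.last m)
  | cast i ih =>
    have hrow := hv i.castSucc
    rw [ratMat_chainMatrix_mulVec_castSucc] at hrow
    have key : (∏ j ∈ Finset.Ici i.castSucc, (a j : ℚ)) * v i.castSucc =
        (∏ j ∈ Finset.Ici i.succ, (a j : ℚ)) * (a i.castSucc * v i.castSucc + v i.succ) -
          (∏ j ∈ Finset.Ici i.succ, (a j : ℚ)) * v i.succ := by
      rw [Fin.prod_Ici_castSucc]; ring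
    rw [key, ← Nat.cast_prod]
    exact ZinQ.sub_mem (natCast_mul_mem_zinQ _ hrow) (by rwa [← Nat.cast_prod] at ih)

lemma chainGenerator_zero :
    chainGenerator a 0 = (-1 : ℚ) ^ (m + 1) / ((∏ i, a i : ℕ) : ℚ) := by
  simp [chainGenerator, Finset.Ici_zero_eq_univ]

variable (ha : ∀ i, 0 < a i)
include ha

lemma exists_zsmul_chainGenerator_zero_eq {q : ℚ} (hq : ((∏ i, a i : ℕ) : ℚ) * q ∈ ZinQ) :
    ∃ k : ℤ, k • chainGenerator a 0 = q := by
  obtain ⟨t, ht⟩ := hq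
  have hN : ((∏ i, a i : ℕ) : ℚ) ≠ 0 := by
    exact_mod_cast Finset.prod_ne_zero_iff.mpr fun i _ => (ha i).ne'
  have hsign : ((-1 : ℚ) ^ (m + 1)) ^ 2 = 1 := by
    rw [← pow_mul, Even.neg_one_pow ⟨m + 1, by ring⟩]
  refine ⟨(-1) ^ (m + 1) * t, ?_⟩
  have hq : q = t / ((∏ i, a i : ℕ) : ℚ) := by
    rw [eq_div_iff hN, mul_comm]
    exact ht.symm
  rw [chainGenerator_zero, zsmul_eq_mul, hq]
  field_simp
  push_cast
  linear_combination (t : ℚ) * hsign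

lemma chainGenerator_castSucc (i : Fin m) :
    a i.castSucc * chainGenerator a i.castSucc + chainGenerator a i.succ = 0 := by
  have := ha i.castSucc
  have := Finset.prod_ne_zero_iff.mpr fun j (_ : j ∈ Finset.Ici i.succ) => (ha j).ne'
  simp only [chainGenerator, Fin.prod_Ici_castSucc, Fin.val_castSucc, Fin.val_succ]
  field_simp
  ring

lemma chainGenerator_last : a (Fin.last m) * chainGenerator a (Fin.last m) = -1 := by
  have := ha (Fin.last m)
  simp only [chainGenerator, Fin.prod_Ici_last, Fin.val_last]
  rw [Odd.neg_one_pow ⟨m, by ring⟩]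
  field_simp

lemma chainMatrix_mulVec_chainGenerator_mem :
    ratMat (chainMatrix a) *ᵥ chainGenerator a ∈ IntLat (m + 1) := by
  rw [mem_intLat_iff]
  intro i
  induction i using Fin.lastCases with
  | last =>
    rw [ratMat_chainMatrix_mulVec_last, chainGenerator_last ha]
    exact neg_mem ⟨1, Int.cast_one⟩
  | cast i =>
    rw [ratMat_chainMatrix_mulVec_castSucc, chainGenerator_castSucc ha]
    exact zero_mem _

lemma zsmul_chainGenerator_mem_intLat_iff (k : ℤ) :
    k • chainGenerator a ∈ IntLat (m + 1) ↔ ((∏ i, a i : ℕ) : ℤ) ∣ k := by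
  have hN : ∏ i, a i ≠ 0 := Finset.prod_ne_zero_iff.mpr fun i _ => (ha i).ne'
  have hmulVec : ratMat (chainMatrix a) *ᵥ (k • chainGenerator a) ∈ IntLat (m + 1) := by
    rw [mulVec_smul]
    exact zsmul_mem (chainMatrix_mulVec_chainGenerator_mem ha) k
  have h0 : (k • chainGenerator a) 0 =
      (((-1) ^ (m + 1) * k : ℤ) : ℚ) / ((∏ i, a i : ℕ) : ℚ) := by
    rw [Pi.smul_apply, chainGenerator_zero, zsmul_eq_mul]
    push_cast
    ring
  rw [← (isUnit_neg_one.pow (m + 1)).dvd_mul_left, ← intCast_div_mem_zinQ_iff hN, ← h0]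
  exact ⟨fun h => mem_intLat_iff.mp h 0, mem_intLat_of_chainMatrix_mulVec_mem hmulVec⟩

lemma addOrderOf_mk_chainGenerator :
    addOrderOf (QuotientAddGroup.mk' (IntLat (m + 1)) (chainGenerator a)) = ∏ i, a i := by
  have key : ∀ k : ℤ,
      (addOrderOf (QuotientAddGroup.mk' (IntLat (m + 1)) (chainGenerator a)) : ℤ) ∣ k ↔
        ((∏ i, a i : ℕ) : ℤ) ∣ k := fun k => by
    rw [addOrderOf_dvd_iff_zsmul_eq_zero, ← map_zsmul, QuotientAddGroup.mk'_apply,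
      QuotientAddGroup.eq_zero_iff, zsmul_chainGenerator_mem_intLat_iff ha]
  exact Nat.dvd_antisymm (Int.natCast_dvd_natCast.mp ((key _).mpr dvd_rfl))
    (Int.natCast_dvd_natCast.mp ((key _).mp dvd_rfl))

lemma autW_chainMatrix :
    AutW (chainMatrix a) =
      AddSubgroup.zmultiples (QuotientAddGroup.mk' (IntLat (m + 1)) (chainGenerator a)) := by
  have hgen := chainMatrix_mulVec_chainGenerator_mem ha
  apply le_antisymm
  · rintro _ ⟨v, hv, rfl⟩
    change ratMat (chainMatrix a) *ᵥ v ∈ IntLat (m + 1) at hv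
    have hv0 := prod_Ici_mul_mem_zinQ_of_chainMatrix_mulVec_mem hv 0
    rw [Finset.Ici_zero_eq_univ, ← Nat.cast_prod] at hv0
    obtain ⟨k, hk⟩ := exists_zsmul_chainGenerator_zero_eq ha hv0
    have hsub : k • chainGenerator a - v ∈ IntLat (m + 1) := by
      refine mem_intLat_of_chainMatrix_mulVec_mem (a := a) ?_ ?_
      · rw [mulVec_sub, mulVec_smul]
        exact sub_mem (zsmul_mem hgen k) hv
      · rw [Pi.sub_apply, Pi.smul_apply, hk, sub_self]
        exact zero_mem ZinQ
    refine AddSubgroup.mem_zmultiples_iff.mpr ⟨k, ?_⟩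
    rw [← map_zsmul, QuotientAddGroup.mk'_apply, QuotientAddGroup.mk'_apply,
      QuotientAddGroup.eq_iff_sub_mem]
    exact hsub
  · exact AddSubgroup.zmultiples_le.mpr ⟨chainGenerator a, hgen, rfl⟩

end Chain

/-- For the chain potential, Aut(W) = A⁻¹ℤ^n/ℤ^n is cyclic of order
a₁⋯aₙ generated by (φ₁,…,φₙ) with φᵢ = (−1)^{n+i}/(aᵢ⋯aₙ). -/
theorem stmt_6 (n : ℕ) (hn : 1 ≤ n) (a : Fin n → ℕ) (ha : ∀ i, 1 ≤ a i)
    (A : Matrix (Fin n) (Fin n) ℤ)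
    (hAdef : A = Matrix.of fun i j =>
      if j = i then (a i : ℤ) else if (i : ℕ) + 1 = (j : ℕ) then 1 else 0)
    (φ : Fin n → ℚ)
    (hφ : φ = fun i : Fin n => ((-1 : ℚ)) ^ (n + (i : ℕ)) / ∏ j ∈ Finset.Ici i, (a j : ℚ)) :
    AutW A = AddSubgroup.zmultiples (QuotientAddGroup.mk' (IntLat n) φ) ∧
      Nat.card (AutW A) = ∏ i, a i := by
  obtain ⟨m, rfl⟩ := Nat.exists_eq_add_of_le' hn
  obtain rfl : A = chainMatrix a := hAdef
  obtain rfl : φ = chainGenerator a := hφ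
  have hAut := autW_chainMatrix ha
  exact ⟨hAut, by rw [hAut, Nat.card_zmultiples, addOrderOf_mk_chainGenerator ha]⟩
end
end

section
/- Let A = B₁C₁ = B₂C₂ give subgroups G₁ = C₁⁻¹ℤ^n/ℤ^n ⊆ G₂ = C₂⁻¹ℤ^n/ℤ^n of A⁻¹ℤ^n/ℤ^n. Then the transposed groups satisfy G₂ᵀ ⊆ G₁ᵀ, and the quotient G₂/G₁ is isomorphic to G₁ᵀ/G₂ᵀ. -/
open Matrix QuotientAddGroup

noncomputable section

/-! If `C₁⁻¹ℤⁿ ⊆ C₂⁻¹ℤⁿ`, the columns of `C₂C₁⁻¹` are integral, so `C₂ = DC₁` for an integer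
matrix `D`; cancelling `C₁` in `B₁C₁ = B₂DC₁` gives `B₁ᵀ = DᵀB₂ᵀ`, whence `G₂ᵀ ⊆ G₁ᵀ`.
Whenever `M = EN`, the surjection `x ↦ M⁻¹x` from `ℤⁿ` onto `M⁻¹ℤⁿ/ℤⁿ` identifies
`(M⁻¹ℤⁿ/ℤⁿ)/(N⁻¹ℤⁿ/ℤⁿ)` with `ℤⁿ/Eℤⁿ`; so `G₂/G₁ ≅ ℤⁿ/Dℤⁿ` and `G₁ᵀ/G₂ᵀ ≅ ℤⁿ/Dᵀℤⁿ`.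
Finally `(x, y) ↦ exp(2πi⟨D⁻¹x, y⟩)` is a perfect pairing of `ℤⁿ/Dℤⁿ` with `ℤⁿ/Dᵀℤⁿ`: it is
nondegenerate on the left, and both groups have order `|det D|`. A finite abelian group being
isomorphic to its character group, `ℤⁿ/Dℤⁿ ≅ ℤⁿ/Dᵀℤⁿ`. -/

lemma intCast_comp_add {ι : Type*} (x y : ι → ℤ) :
    ((↑) ∘ (x + y) : ι → ℚ) = (↑) ∘ x + (↑) ∘ y :=
  funext fun i => Int.cast_add (x i) (y i)

lemma intCast_comp_single {ι : Type*} [DecidableEq ι] (j : ι) (m : ℤ) :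
    ((↑) ∘ Pi.single j m : ι → ℚ) = Pi.single j (m : ℚ) :=
  funext fun i => by by_cases h : i = j <;> simp [h]

def expChar : ℚ →+ Additive ℂˣ :=
  (Circle.toUnits.toAdditive.comp Circle.expHom).comp
    ((AddMonoidHom.mulLeft (2 * Real.pi)).comp (Rat.castHom ℝ).toAddMonoidHom)

lemma expChar_eq_zero_iff {q : ℚ} : expChar q = 0 ↔ ∃ m : ℤ, (m : ℚ) = q := by
  have h2π : 2 * Real.pi ≠ 0 := by positivity
  change Additive.ofMul (Circle.toUnits (Circle.exp (2 * Real.pi * q))) = Additive.ofMul 1 ↔ _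
  rw [Additive.ofMul.injective.eq_iff, Circle.toUnits_apply, Units.ext_iff, Units.val_mk0,
    Units.val_one, Circle.coe_eq_one, Circle.exp_eq_one]
  refine exists_congr fun m => ?_
  rw [mul_comm, mul_left_inj' h2π, eq_comm]
  exact_mod_cast Iff.rfl

lemma expChar_intCast_dotProduct {ι : Type*} [Fintype ι] (x y : ι → ℤ) :
    expChar (((↑) ∘ x : ι → ℚ) ⬝ᵥ ((↑) ∘ y)) = 0 :=
  expChar_eq_zero_iff.mpr ⟨x ⬝ᵥ y, RingHom.map_dotProduct (Int.castRingHom ℚ) x y⟩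

theorem AddCommGroup.nonempty_addEquiv_addMonoidHom_units_complex (G : Type*) [AddCommGroup G]
    [Finite G] : Nonempty (G ≃+ (G →+ Additive ℂˣ)) := by
  obtain ⟨e⟩ := CommGroup.monoidHom_mulEquiv_of_hasEnoughRootsOfUnity (Multiplicative G) ℂ
  exact ⟨(MulEquiv.toAdditive e.symm).trans AddMonoidHom.toMultiplicativeLeftAddEquiv.symm⟩

namespace Matrix

variable {ι : Type*} [Fintype ι]

def imageLattice (D : Matrix ι ι ℤ) : AddSubgroup (ι → ℤ) :=
  (LinearMap.range D.mulVecLin).toAddSubgroup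

lemma mem_imageLattice {D : Matrix ι ι ℤ} {x : ι → ℤ} :
    x ∈ D.imageLattice ↔ ∃ z, D *ᵥ z = x := Iff.rfl

lemma map_intCast_mulVec (D : Matrix ι ι ℤ) (x : ι → ℤ) :
    D.map ((↑) : ℤ → ℚ) *ᵥ ((↑) ∘ x) = (↑) ∘ (D *ᵥ x) :=
  funext fun i => (RingHom.map_mulVec (Int.castRingHom ℚ) D x i).symm

variable [DecidableEq ι]

lemma eq_of_mul_eq_mul_of_det_ne_zero {R : Type*} [CommRing R] [IsDomain R]
    {A B C : Matrix ι ι R} (hC : C.det ≠ 0) (h : A * C = B * C) : A = B := by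
  have h' := congrArg (· * C.adjugate) h
  simp only [Matrix.mul_assoc, mul_adjugate, Matrix.mul_smul, Matrix.mul_one] at h'
  exact smul_right_injective _ hC h'

lemma isUnit_det_map_intCast {D : Matrix ι ι ℤ} (hD : D.det ≠ 0) :
    IsUnit (D.map ((↑) : ℤ → ℚ)).det := by
  have h : ((D.det : ℤ) : ℚ) = (D.map (↑)).det := (Int.castRingHom ℚ).map_det D
  rw [isUnit_iff_ne_zero, ← h]
  exact_mod_cast hD

lemma mem_imageLattice_iff {D : Matrix ι ι ℤ} (hD : D.det ≠ 0) {x : ι → ℤ} :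
    x ∈ D.imageLattice ↔ ∃ z : ι → ℤ, (↑) ∘ z = (D.map ((↑) : ℤ → ℚ))⁻¹ *ᵥ ((↑) ∘ x) := by
  have hu := isUnit_det_map_intCast hD
  rw [mem_imageLattice]
  constructor
  · rintro ⟨z, rfl⟩
    refine ⟨z, ?_⟩
    rw [← map_intCast_mulVec, mulVec_mulVec, nonsing_inv_mul _ hu, one_mulVec]
  · rintro ⟨z, hz⟩
    refine ⟨z, (Int.cast_injective (α := ℚ)).comp_left ?_⟩
    change ((↑) ∘ (D *ᵥ z) : ι → ℚ) = (↑) ∘ x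
    rw [← map_intCast_mulVec, hz, mulVec_mulVec, mul_nonsing_inv _ hu, one_mulVec]

lemma natCard_quotient_imageLattice {D : Matrix ι ι ℤ} (hD : D.det ≠ 0) :
    Nat.card ((ι → ℤ) ⧸ D.imageLattice) = D.det.natAbs := by
  let e := LinearEquiv.ofInjective D.mulVecLin (mulVec_injective_of_det_ne_zero hD)
  show Nat.card ((ι → ℤ) ⧸ LinearMap.range D.mulVecLin) = _
  rw [← LinearMap.det_toLin', toLin'_apply', ← Submodule.natAbs_det_equiv _ e]
  rfl

def dualPairing (D : Matrix ι ι ℤ) : (ι → ℤ) →+ (ι → ℤ) →+ Additive ℂˣ :=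
  AddMonoidHom.mk'
    (fun x => AddMonoidHom.mk'
      (fun y => expChar ((D.map ((↑) : ℤ → ℚ))⁻¹ *ᵥ ((↑) ∘ x) ⬝ᵥ ((↑) ∘ y)))
      (fun y y' => by rw [intCast_comp_add, dotProduct_add, map_add]))
    (fun x x' => AddMonoidHom.ext fun y => by
      simp only [AddMonoidHom.mk'_apply, AddMonoidHom.add_apply, intCast_comp_add, mulVec_add,
        add_dotProduct, map_add])

lemma dualPairing_apply (D : Matrix ι ι ℤ) (x y : ι → ℤ) :
    D.dualPairing x y = expChar ((D.map ((↑) : ℤ → ℚ))⁻¹ *ᵥ ((↑) ∘ x) ⬝ᵥ ((↑) ∘ y)) := rfl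

section Pairing

variable {D : Matrix ι ι ℤ} (hD : D.det ≠ 0)
include hD

lemma dualPairing_eq_zero_of_mem_left {x : ι → ℤ} (hx : x ∈ D.imageLattice) (y : ι → ℤ) :
    D.dualPairing x y = 0 := by
  obtain ⟨z, hz⟩ := (mem_imageLattice_iff hD).mp hx
  rw [dualPairing_apply, ← hz, expChar_intCast_dotProduct]

lemma dualPairing_eq_zero_of_mem_right (x : ι → ℤ) {y : ι → ℤ} (hy : y ∈ Dᵀ.imageLattice) :
    D.dualPairing x y = 0 := by
  obtain ⟨z, rfl⟩ := mem_imageLattice.mp hy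
  rw [dualPairing_apply, ← map_intCast_mulVec, transpose_map, dotProduct_mulVec, vecMul_transpose,
    mulVec_mulVec, mul_nonsing_inv _ (isUnit_det_map_intCast hD), one_mulVec,
    expChar_intCast_dotProduct]

def cokernelPairing :
    (ι → ℤ) ⧸ D.imageLattice →+ ((ι → ℤ) ⧸ Dᵀ.imageLattice →+ Additive ℂˣ) :=
  QuotientAddGroup.lift _
    { toFun x := QuotientAddGroup.lift _ (D.dualPairing x)
        fun _ hy => AddMonoidHom.mem_ker.mpr (dualPairing_eq_zero_of_mem_right hD x hy)
      map_zero' := QuotientAddGroup.addMonoidHom_ext _ (by simp)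
      map_add' x x' := QuotientAddGroup.addMonoidHom_ext _ (by
        rw [AddMonoidHom.add_comp, QuotientAddGroup.lift_comp_mk', QuotientAddGroup.lift_comp_mk',
          QuotientAddGroup.lift_comp_mk', map_add]) }
    fun x hx => AddMonoidHom.mem_ker.mpr <| QuotientAddGroup.addMonoidHom_ext _ <|
      AddMonoidHom.ext fun y => dualPairing_eq_zero_of_mem_left hD hx y

lemma cokernelPairing_mk_mk (x y : ι → ℤ) :
    cokernelPairing hD (x : (ι → ℤ) ⧸ D.imageLattice) (y : (ι → ℤ) ⧸ Dᵀ.imageLattice) =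
      D.dualPairing x y := rfl

lemma cokernelPairing_injective : Function.Injective (cokernelPairing hD) := by
  refine (injective_iff_map_eq_zero _).mpr fun q hq => ?_
  obtain ⟨x, rfl⟩ := QuotientAddGroup.mk_surjective q
  have h : ∀ j, ∃ m : ℤ, (m : ℚ) = ((D.map ((↑) : ℤ → ℚ))⁻¹ *ᵥ ((↑) ∘ x)) j := fun j => by
    have hj := DFunLike.congr_fun hq ((Pi.single j 1 : ι → ℤ) : (ι → ℤ) ⧸ Dᵀ.imageLattice)
    rw [cokernelPairing_mk_mk, dualPairing_apply, intCast_comp_single, dotProduct_single,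
      Int.cast_one, mul_one] at hj
    exact expChar_eq_zero_iff.mp hj
  choose z hz using h
  exact (QuotientAddGroup.eq_zero_iff _).mpr ((mem_imageLattice_iff hD).mpr ⟨z, funext hz⟩)

theorem nonempty_quotient_imageLattice_transpose_addEquiv :
    Nonempty ((ι → ℤ) ⧸ D.imageLattice ≃+ (ι → ℤ) ⧸ Dᵀ.imageLattice) := by
  have hDT : Dᵀ.det ≠ 0 := by rwa [det_transpose]
  have hcard : Nat.card ((ι → ℤ) ⧸ Dᵀ.imageLattice) = Nat.card ((ι → ℤ) ⧸ D.imageLattice) := by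
    rw [natCard_quotient_imageLattice hD, natCard_quotient_imageLattice hDT, det_transpose]
  have : Finite ((ι → ℤ) ⧸ Dᵀ.imageLattice) := Nat.finite_of_card_ne_zero <| by
    rw [natCard_quotient_imageLattice hDT]
    exact Int.natAbs_ne_zero.mpr hDT
  obtain ⟨e⟩ :=
    AddCommGroup.nonempty_addEquiv_addMonoidHom_units_complex ((ι → ℤ) ⧸ Dᵀ.imageLattice)
  have := Finite.of_equiv _ e.toEquiv
  have hbij := (cokernelPairing_injective hD).bijective_of_nat_card_le
    (by rw [← Nat.card_congr e.toEquiv, hcard])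
  exact ⟨(AddEquiv.ofBijective _ hbij).trans e.symm⟩

end Pairing

end Matrix

variable {n : ℕ}

lemma ratMat_mul (M N : Matrix (Fin n) (Fin n) ℤ) : ratMat (M * N) = ratMat M * ratMat N :=
  Matrix.map_mul (f := Int.castRingHom ℚ)

lemma isUnit_det_ratMat {M : Matrix (Fin n) (Fin n) ℤ} (hM : M.det ≠ 0) :
    IsUnit (ratMat M).det :=
  isUnit_det_map_intCast hM

lemma mem_intLat_iff_s12 {v : Fin n → ℚ} : v ∈ IntLat n ↔ ∃ z : Fin n → ℤ, (↑) ∘ z = v :=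
  ⟨fun hv => ⟨fun i => (hv i).choose, funext fun i => (hv i).choose_spec.symm⟩,
    fun ⟨z, hz⟩ i => ⟨z i, by rw [← hz]; rfl⟩⟩

lemma ratMat_mulVec_mem_intLat (M : Matrix (Fin n) (Fin n) ℤ) {v : Fin n → ℚ}
    (hv : v ∈ IntLat n) : ratMat M *ᵥ v ∈ IntLat n := by
  obtain ⟨z, rfl⟩ := mem_intLat_iff_s12.mp hv
  exact mem_intLat_iff_s12.mpr ⟨M *ᵥ z, (map_intCast_mulVec M z).symm⟩

lemma mk_mem_autW_iff (M : Matrix (Fin n) (Fin n) ℤ) (v : Fin n → ℚ) :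
    (v : QuotLat n) ∈ AutW M ↔ ratMat M *ᵥ v ∈ IntLat n := by
  refine ⟨?_, fun hv => ⟨v, hv, rfl⟩⟩
  rintro ⟨w, hw, hwv⟩
  have hd : -w + v ∈ IntLat n := QuotientAddGroup.eq.mp hwv
  rw [show v = w + (-w + v) by abel, mulVec_add]
  exact add_mem hw (ratMat_mulVec_mem_intLat M hd)

lemma autW_le_autW_mul (E N : Matrix (Fin n) (Fin n) ℤ) : AutW N ≤ AutW (E * N) := by
  rintro _ ⟨v, hv, rfl⟩
  refine ⟨v, ?_, rfl⟩
  change ratMat (E * N) *ᵥ v ∈ IntLat n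
  rw [ratMat_mul, ← mulVec_mulVec]
  exact ratMat_mulVec_mem_intLat E hv

lemma exists_eq_mul_of_autW_le {M N : Matrix (Fin n) (Fin n) ℤ} (hN : N.det ≠ 0)
    (h : AutW N ≤ AutW M) : ∃ E, M = E * N := by
  have hu := isUnit_det_ratMat hN
  have hcol : ∀ i j, ∃ m : ℤ, (m : ℚ) = (ratMat M * (ratMat N)⁻¹) i j := fun i j => by
    have hj : ((ratMat N)⁻¹ *ᵥ Pi.single j 1 : QuotLat n) ∈ AutW N := by
      rw [mk_mem_autW_iff, mulVec_mulVec, mul_nonsing_inv _ hu, one_mulVec]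
      exact mem_intLat_iff_s12.mpr ⟨Pi.single j 1, by rw [intCast_comp_single, Int.cast_one]⟩
    obtain ⟨m, hm⟩ := (mk_mem_autW_iff M _).mp (h hj) i
    rw [mulVec_mulVec, mulVec_single_one] at hm
    exact ⟨m, hm.symm⟩
  choose E hE using hcol
  refine ⟨Matrix.of E, Matrix.map_injective (f := ((↑) : ℤ → ℚ)) Int.cast_injective ?_⟩
  change ratMat M = ratMat (Matrix.of E * N)
  rw [ratMat_mul, show ratMat (Matrix.of E) = ratMat M * (ratMat N)⁻¹ from Matrix.ext hE,
    nonsing_inv_mul_cancel_right _ _ hu]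

def toAutW {M : Matrix (Fin n) (Fin n) ℤ} (hM : M.det ≠ 0) : (Fin n → ℤ) →+ AutW M :=
  AddMonoidHom.codRestrict
    ((QuotientAddGroup.mk' (IntLat n)).comp
      ((ratMat M)⁻¹.mulVecLin.toAddMonoidHom.comp ((Int.castAddHom ℚ).compLeft (Fin n))))
    (AutW M) fun x => by
      change (((ratMat M)⁻¹ *ᵥ ((↑) ∘ x) : Fin n → ℚ) : QuotLat n) ∈ AutW M
      rw [mk_mem_autW_iff, mulVec_mulVec, mul_nonsing_inv _ (isUnit_det_ratMat hM), one_mulVec]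
      exact mem_intLat_iff_s12.mpr ⟨x, rfl⟩

section toAutW

variable {M : Matrix (Fin n) (Fin n) ℤ} (hM : M.det ≠ 0)

lemma coe_toAutW (x : Fin n → ℤ) :
    (toAutW hM x : QuotLat n) = ((ratMat M)⁻¹ *ᵥ ((↑) ∘ x) : Fin n → ℚ) := rfl

lemma toAutW_surjective : Function.Surjective (toAutW hM) := by
  rintro ⟨_, v, hv, rfl⟩
  obtain ⟨z, hz⟩ := mem_intLat_iff_s12.mp (show ratMat M *ᵥ v ∈ IntLat n from hv)
  refine ⟨z, Subtype.ext ?_⟩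
  rw [coe_toAutW, hz, mulVec_mulVec, nonsing_inv_mul _ (isUnit_det_ratMat hM), one_mulVec]
  rfl

end toAutW

lemma nonempty_quotient_autW_mul_addEquiv {E N : Matrix (Fin n) (Fin n) ℤ}
    (h : (E * N).det ≠ 0) :
    Nonempty (↥(AutW (E * N)) ⧸ (AutW N).addSubgroupOf (AutW (E * N)) ≃+
      (Fin n → ℤ) ⧸ E.imageLattice) := by
  rw [det_mul] at h
  have hE : E.det ≠ 0 := left_ne_zero_of_mul h
  have hinv : ratMat N * (ratMat (E * N))⁻¹ = (ratMat E)⁻¹ := by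
    rw [ratMat_mul, Matrix.mul_inv_rev,
      mul_nonsing_inv_cancel_left _ _ (isUnit_det_ratMat (right_ne_zero_of_mul h))]
  rw [← det_mul] at h
  let g := (QuotientAddGroup.mk' ((AutW N).addSubgroupOf (AutW (E * N)))).comp (toAutW h)
  have hsurj : Function.Surjective g :=
    (QuotientAddGroup.mk'_surjective _).comp (toAutW_surjective h)
  have hker : g.ker = E.imageLattice := by
    ext x
    rw [AddMonoidHom.mem_ker, AddMonoidHom.comp_apply, QuotientAddGroup.mk'_apply,
      QuotientAddGroup.eq_zero_iff, AddSubgroup.mem_addSubgroupOf, coe_toAutW, mk_mem_autW_iff,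
      mulVec_mulVec, hinv, mem_imageLattice_iff hE, mem_intLat_iff_s12]
    rfl
  exact ⟨(QuotientAddGroup.quotientKerEquivOfSurjective g hsurj).symm.trans
    (QuotientAddGroup.quotientAddEquivOfEq hker)⟩

theorem stmt_12_general (n : ℕ) (A B₁ C₁ B₂ C₂ : Matrix (Fin n) (Fin n) ℤ)
    (hB₁ : B₁.det ≠ 0) (hC₁ : C₁.det ≠ 0) (hC₂ : C₂.det ≠ 0)
    (hfact₁ : A = B₁ * C₁) (hfact₂ : A = B₂ * C₂)
    (hle : AutW C₁ ≤ AutW C₂) :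
    AutW B₂ᵀ ≤ AutW B₁ᵀ ∧
      Nonempty
        ((↥(AutW C₂) ⧸ (AutW C₁).addSubgroupOf (AutW C₂)) ≃+
          (↥(AutW B₁ᵀ) ⧸ (AutW B₂ᵀ).addSubgroupOf (AutW B₁ᵀ))) := by
  obtain ⟨D, rfl⟩ := exists_eq_mul_of_autW_le hC₁ hle
  have hD : D.det ≠ 0 := left_ne_zero_of_mul (det_mul D C₁ ▸ hC₂)
  have hB : B₁ = B₂ * D :=
    eq_of_mul_eq_mul_of_det_ne_zero hC₁ (by rw [← hfact₁, hfact₂, Matrix.mul_assoc])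
  subst hB
  have hBT : (Dᵀ * B₂ᵀ).det ≠ 0 := by rwa [← transpose_mul, det_transpose]
  rw [transpose_mul]
  obtain ⟨e₁⟩ := nonempty_quotient_autW_mul_addEquiv hC₂
  obtain ⟨e₂⟩ := nonempty_quotient_autW_mul_addEquiv hBT
  obtain ⟨e₃⟩ := nonempty_quotient_imageLattice_transpose_addEquiv hD
  exact ⟨autW_le_autW_mul _ _, ⟨e₁.trans (e₃.trans e₂.symm)⟩⟩

/-- If G₁ ⊆ G₂ then G₂ᵀ ⊆ G₁ᵀ and G₂/G₁ ≅ G₁ᵀ/G₂ᵀ. -/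
theorem stmt_12 (n : ℕ) (A B₁ C₁ B₂ C₂ : Matrix (Fin n) (Fin n) ℤ)
    (hB₁ : B₁.det ≠ 0) (hC₁ : C₁.det ≠ 0) (hB₂ : B₂.det ≠ 0) (hC₂ : C₂.det ≠ 0)
    (hfact₁ : A = B₁ * C₁) (hfact₂ : A = B₂ * C₂)
    (hle : AutW C₁ ≤ AutW C₂) :
    AutW B₂ᵀ ≤ AutW B₁ᵀ ∧
      Nonempty
        ((↥(AutW C₂) ⧸ (AutW C₁).addSubgroupOf (AutW C₂)) ≃+
          (↥(AutW B₁ᵀ) ⧸ (AutW B₂ᵀ).addSubgroupOf (AutW B₁ᵀ))) :=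
  stmt_12_general n A B₁ C₁ B₂ C₂ hB₁ hC₁ hC₂ hfact₁ hfact₂ hle
end
end

section
/- Let A = BC with A, B, C ∈ M(n,ℤ) invertible over ℚ, G = C⁻¹ℤ^n/ℤ^n ⊆ A⁻¹ℤ^n/ℤ^n, and Gᵀ = (Bᵀ)⁻¹ℤ^n/ℤ^n ⊆ (Aᵀ)⁻¹ℤ^n/ℤ^n. Then Gᵀ equals the orthogonal complement of G with respect to the pairing b̄(u,v) = uᵀAv mod ℤ, i.e. Gᵀ = {x ∈ (Aᵀ)⁻¹ℤ^n/ℤ^n : b̄(x,y) = 0 for all y ∈ G}. -/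
open Matrix QuotientAddGroup

noncomputable section

/-- For A = BC, Gᵀ = (Bᵀ)⁻¹ℤ^n/ℤ^n is the orthogonal complement of
G = C⁻¹ℤ^n/ℤ^n with respect to the pairing b̄(u,v) = uᵀAv mod ℤ. -/
theorem stmt_14 (n : ℕ) (A B C : Matrix (Fin n) (Fin n) ℤ)
    (hB : B.det ≠ 0) (hC : C.det ≠ 0) (hfact : A = B * C) :
    ∀ x : Fin n → ℚ, (ratMat Aᵀ).mulVec x ∈ IntLat n →
      ((ratMat Bᵀ).mulVec x ∈ IntLat n ↔
        ∀ y : Fin n → ℚ, (ratMat C).mulVec y ∈ IntLat n →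
          ∃ m : ℤ, x ⬝ᵥ (ratMat A).mulVec y = (m : ℚ)) := by
  intro x _hx
  have hmul : ratMat A = ratMat B * ratMat C := by
    have : ((↑) : ℤ → ℚ) = ⇑(Int.castRingHom ℚ) := rfl
    simp only [ratMat, hfact, this, Matrix.map_mul]
  have key : ∀ y : Fin n → ℚ,
      x ⬝ᵥ (ratMat A).mulVec y = (ratMat Bᵀ).mulVec x ⬝ᵥ (ratMat C).mulVec y := by
    intro y
    rw [hmul, ← Matrix.mulVec_mulVec, Matrix.dotProduct_mulVec (w := (ratMat C).mulVec y),
      ← Matrix.transpose_transpose (ratMat B), Matrix.vecMul_transpose]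
    congr 2
  constructor
  · intro hBx y hCy
    choose p hp using hBx
    choose q hq using hCy
    refine ⟨∑ i, p i * q i, ?_⟩
    rw [key]
    simp only [dotProduct, hp, hq]
    push_cast
    rfl
  · intro h i
    have hCdet : IsUnit (ratMat C).det := by
      simp only [ratMat]
      rw [show (C.map Int.cast).det = ((C.det : ℤ) : ℚ) from ((Int.castRingHom ℚ).map_det C).symm]
      exact isUnit_iff_ne_zero.mpr (by exact_mod_cast hC)
    have hinv := Matrix.mul_nonsing_inv (ratMat C) hCdet
    set y : Fin n → ℚ := (ratMat C)⁻¹.mulVec (Pi.single i 1) with hy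
    have hCy : (ratMat C).mulVec y ∈ IntLat n := by
      have : (ratMat C).mulVec y = Pi.single i 1 := by
        rw [hy, Matrix.mulVec_mulVec, hinv, Matrix.one_mulVec]
      rw [this]
      intro j
      by_cases hj : j = i
      · exact ⟨1, by subst hj; simp⟩
      · exact ⟨0, by simp [hj]⟩
    obtain ⟨m, hm⟩ := h y hCy
    refine ⟨m, ?_⟩
    rw [← hm, key]
    have : (ratMat C).mulVec y = Pi.single i 1 := by
      rw [hy, Matrix.mulVec_mulVec, hinv, Matrix.one_mulVec]
    rw [this, dotProduct_single, mul_one]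
end
end
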